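/- Let U be a linear algebraic group with a closed embedding into some U_N. For any d > 0 and any rational U-module M: (1) M_{<d} = (M_{<d})_{<d}; (2) the inclusion functor ι_d from the category of k[U]_{<d}-comodules to the category of k[U]-comodules (rational U-modules), induced by the inclusion of coalgebras k[U]_{<d} ⊂ k[U], is left adjoint to the functor M ↦ M_{<d}. -/

import Mathlib

/-!
Both parts only use coassociativity of the coaction and the fact that `B = k[U]_{<d}` is a
subcoalgebra, `Δ(B) ⊆ B ⊗ B`. The latter holds already on `k[U_N]`: `Δ` is an algebra map
sending each `x_{i,j}` into `k[U_N]_{≤1} ⊗ k[U_N]_{≤1}`, and these products are multiplicative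
in the degree, so `Δ(k[U_N]_{≤n}) ⊆ k[U_N]_{≤n} ⊗ k[U_N]_{≤n}`; `π`, being compatible with `Δ`,
transports this to `k[U]`.

For (1), `M_B` is the kernel of `g = (1 ⊗ q) ∘ ρ` with `q : k[U] → k[U]/B`. If `ρ m ∈ M ⊗ B`,
coassociativity gives `(ρ ⊗ 1)(ρ m) = (1 ⊗ Δ)(ρ m) ∈ M ⊗ B ⊗ k[U]`, so `(g ⊗ 1)(ρ m) = 0`; over
a field `ker (g ⊗ 1_B) = ker g ⊗ B`, whence `ρ m ∈ M_B ⊗ B`. Part (2) is naturality of `- ⊗ B`.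
-/

noncomputable section

open TensorProduct

variable (k : Type) [Field k]

/-- index set of strictly-upper-triangular matrix entries -/
abbrev UTIdx (N : ℕ) : Type := {ij : Fin N × Fin N // ij.1 < ij.2}

/-- `k[U_N]`, the polynomial algebra on the coordinate functions `x_{i,j}`, `i < j`. -/
abbrev UNCoord (N : ℕ) : Type := MvPolynomial (UTIdx N) k

/-- the comultiplication of `k[U_N]`:
`Δ(x_{i,j}) = x_{i,j} ⊗ 1 + Σ_{i<t<j} x_{i,t} ⊗ x_{t,j} + 1 ⊗ x_{i,j}`. -/
def UNComul (N : ℕ) : UNCoord k N →ₐ[k] UNCoord k N ⊗[k] UNCoord k N :=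
  MvPolynomial.aeval fun ij : UTIdx N =>
    (MvPolynomial.X ij ⊗ₜ[k] 1) + (1 ⊗ₜ[k] MvPolynomial.X ij) +
      ∑ t : Fin N,
        if h : ij.1.1 < t ∧ t < ij.1.2 then
          MvPolynomial.X (⟨(ij.1.1, t), h.1⟩ : UTIdx N) ⊗ₜ[k]
            MvPolynomial.X (⟨(t, ij.1.2), h.2⟩ : UTIdx N)
        else 0

/-- the counit of `k[U_N]` (evaluation at the identity matrix). -/
def UNCounit (N : ℕ) : UNCoord k N →ₐ[k] k := MvPolynomial.aeval fun _ => 0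

/-- `k[U_N]_{<d}`: polynomials of (total) degree `< d`. -/
def UNdegLT (N d : ℕ) : Submodule k (UNCoord k N) :=
  MvPolynomial.restrictTotalDegree (UTIdx N) k (d - 1)

variable {k}

/-- `(Δ, ε, ρ)`: `ρ : M → M ⊗ C` is a right comodule structure over the coalgebra `(C, Δ, ε)`. -/
def IsComodule {C M : Type} [AddCommGroup C] [Module k C] [AddCommGroup M] [Module k M]
    (Δ : C →ₗ[k] C ⊗[k] C) (ε : C →ₗ[k] k) (ρ : M →ₗ[k] M ⊗[k] C) : Prop :=
  (∀ m, (TensorProduct.assoc k M C C) (LinearMap.rTensor C ρ (ρ m)) =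
      LinearMap.lTensor M Δ (ρ m)) ∧
  (∀ m, (TensorProduct.rid k M) (LinearMap.lTensor M ε (ρ m)) = m)

/-- a map of right `C`-comodules -/
def IsComoduleMap {C M M' : Type} [AddCommGroup C] [Module k C]
    [AddCommGroup M] [Module k M] [AddCommGroup M'] [Module k M']
    (ρ : M →ₗ[k] M ⊗[k] C) (ρ' : M' →ₗ[k] M' ⊗[k] C) (f : M →ₗ[k] M') : Prop :=
  ρ' ∘ₗ f = LinearMap.rTensor C f ∘ₗ ρ

/-- `M_B = { m : ρ(m) ∈ M ⊗ B }` for a subspace `B ⊆ C`. -/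
def subFilt {C M : Type} [AddCommGroup C] [Module k C] [AddCommGroup M] [Module k M]
    (ρ : M →ₗ[k] M ⊗[k] C) (B : Submodule k C) : Submodule k M :=
  Submodule.comap ρ (LinearMap.range (LinearMap.lTensor M B.subtype))

/-- `L` is an injective object of the category of right `C`-comodules. -/
def IsInjectiveComodule {C L : Type} [AddCommGroup C] [Module k C] [AddCommGroup L] [Module k L]
    (Δ : C →ₗ[k] C ⊗[k] C) (ε : C →ₗ[k] k) (ρL : L →ₗ[k] L ⊗[k] C) : Prop :=
  ∀ (M M' : Type) (_ : AddCommGroup M) (_ : Module k M) (_ : AddCommGroup M') (_ : Module k M')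
    (ρM : M →ₗ[k] M ⊗[k] C) (ρM' : M' →ₗ[k] M' ⊗[k] C),
    IsComodule Δ ε ρM → IsComodule Δ ε ρM' →
    ∀ g : M' →ₗ[k] M, IsComoduleMap ρM' ρM g → Function.Injective g →
    ∀ f : M' →ₗ[k] L, IsComoduleMap ρM' ρL f →
    ∃ h : M →ₗ[k] L, IsComoduleMap ρM ρL h ∧ h ∘ₗ g = f

/-- `L_B` is an injective object of the category of comodules over the sub-coalgebra `B ⊆ C`
(identified with the full subcategory of `C`-comodules whose coaction lands in `(-) ⊗ B`). -/
def IsInjectiveInSub {C L : Type} [AddCommGroup C] [Module k C] [AddCommGroup L] [Module k L]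
    (Δ : C →ₗ[k] C ⊗[k] C) (ε : C →ₗ[k] k) (B : Submodule k C)
    (ρL : L →ₗ[k] L ⊗[k] C) : Prop :=
  ∀ (M M' : Type) (_ : AddCommGroup M) (_ : Module k M) (_ : AddCommGroup M') (_ : Module k M')
    (ρM : M →ₗ[k] M ⊗[k] C) (ρM' : M' →ₗ[k] M' ⊗[k] C),
    IsComodule Δ ε ρM → IsComodule Δ ε ρM' →
    (∀ m, ρM m ∈ LinearMap.range (LinearMap.lTensor M B.subtype)) →
    (∀ m', ρM' m' ∈ LinearMap.range (LinearMap.lTensor M' B.subtype)) →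
    ∀ g : M' →ₗ[k] M, IsComoduleMap ρM' ρM g → Function.Injective g →
    ∀ f : M' →ₗ[k] L, IsComoduleMap ρM' ρL f → (∀ m', f m' ∈ subFilt ρL B) →
    ∃ h : M →ₗ[k] L, IsComoduleMap ρM ρL h ∧ (∀ m, h m ∈ subFilt ρL B) ∧ h ∘ₗ g = f

open MvPolynomial

section PolynomialFiltration

variable {σ R : Type*} [CommSemiring R]

theorem MvPolynomial.restrictTotalDegree_mono {m n : ℕ} (h : m ≤ n) :
    restrictTotalDegree σ R m ≤ restrictTotalDegree σ R n := fun f hf =>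
  (mem_restrictTotalDegree σ _ f).2 (((mem_restrictTotalDegree σ _ f).1 hf).trans h)

theorem MvPolynomial.restrictTotalDegree_mul_le (m n : ℕ) :
    restrictTotalDegree σ R m * restrictTotalDegree σ R n ≤ restrictTotalDegree σ R (m + n) :=
  Submodule.mul_le.2 fun f hf g hg => (mem_restrictTotalDegree σ _ _).2 <|
    (totalDegree_mul f g).trans <|
      add_le_add ((mem_restrictTotalDegree σ _ f).1 hf) ((mem_restrictTotalDegree σ _ g).1 hg)

theorem MvPolynomial.algHom_mem_of_gradedMonoid {A : Type*} [CommSemiring A] [Algebra R A]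
    (T : ℕ → Submodule R A) [SetLike.GradedMonoid T] (hT : Monotone T)
    (φ : MvPolynomial σ R →ₐ[R] A) (hφ : ∀ i, φ (X i) ∈ T 1) (f : MvPolynomial σ R) :
    φ f ∈ T f.totalDegree := by
  have hsum : φ f = ∑ s ∈ f.support, φ (monomial s (coeff s f)) := by
    rw [← map_sum, ← f.as_sum]
  rw [hsum]
  refine Submodule.sum_mem _ fun s hs => hT (le_totalDegree hs) ?_
  rw [aeval_unique φ, aeval_monomial, Algebra.algebraMap_eq_smul_one, smul_one_mul, Finsupp.prod]
  refine Submodule.smul_mem _ _ ?_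
  simpa [Finsupp.sum] using SetLike.prod_pow_mem_graded T (fun _ => 1) (φ ∘ X) s (fun i _ => hφ i)

end PolynomialFiltration

section TensorSubmodule

theorem LinearMap.lTensor_rTensor_comm_apply {R M N P Q : Type*} [CommSemiring R]
    [AddCommMonoid M] [Module R M] [AddCommMonoid N] [Module R N]
    [AddCommMonoid P] [Module R P] [AddCommMonoid Q] [Module R Q]
    (f : M →ₗ[R] N) (g : P →ₗ[R] Q) (x : M ⊗[R] P) :
    LinearMap.lTensor N g (LinearMap.rTensor P f x) =
      LinearMap.rTensor Q f (LinearMap.lTensor M g x) :=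
  (LinearMap.congr_fun (LinearMap.lTensor_comp_rTensor _ f g) x).trans
    (LinearMap.congr_fun (LinearMap.rTensor_comp_lTensor _ f g) x).symm

theorem comul_mem_range_mapIncl_map {R C₀ C : Type*} [CommSemiring R]
    [AddCommMonoid C₀] [Module R C₀] [AddCommMonoid C] [Module R C]
    {Δ₀ : C₀ →ₗ[R] C₀ ⊗[R] C₀} {Δ : C →ₗ[R] C ⊗[R] C} {π : C₀ →ₗ[R] C}
    (hπ : ∀ f, Δ (π f) = TensorProduct.map π π (Δ₀ f)) {F : Submodule R C₀}
    (hF : ∀ f ∈ F, Δ₀ f ∈ LinearMap.range (mapIncl F F)) {b : C} (hb : b ∈ F.map π) :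
    Δ b ∈ LinearMap.range (mapIncl (F.map π) (F.map π)) := by
  obtain ⟨f, hf, rfl⟩ := hb
  obtain ⟨z, hz⟩ := hF f hf
  have hrange : LinearMap.range (π ∘ₗ F.subtype) ≤ LinearMap.range (F.map π).subtype := by
    rw [LinearMap.range_comp, Submodule.range_subtype, Submodule.range_subtype]
  refine range_map_mono hrange hrange ⟨z, ?_⟩
  rw [hπ, ← hz, TensorProduct.map_map]


variable {R S S' : Type*} [CommSemiring R] [Semiring S] [Semiring S'] [Algebra R S] [Algebra R S']

theorem TensorProduct.range_mapIncl_mul_le (p p' : Submodule R S) (q q' : Submodule R S') :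
    LinearMap.range (mapIncl p q) * LinearMap.range (mapIncl p' q') ≤
      LinearMap.range (mapIncl (p * p') (q * q')) := by
  simp only [range_mapIncl, Submodule.map₂_eq_span_image2, Submodule.span_mul_span]
  refine Submodule.span_mono ?_
  rintro _ ⟨_, ⟨a, ha, b, hb, rfl⟩, _, ⟨a', ha', b', hb', rfl⟩, rfl⟩
  exact ⟨a * a', Submodule.mul_mem_mul ha ha', b * b', Submodule.mul_mem_mul hb hb',
    (Algebra.TensorProduct.tmul_mul_tmul a a' b b').symm⟩

end TensorSubmodule

variable (σ R : Type*) [CommSemiring R] in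
def MvPolynomial.tensorTotalDegreeFiltration (n : ℕ) :
    Submodule R (MvPolynomial σ R ⊗[R] MvPolynomial σ R) :=
  LinearMap.range (mapIncl (restrictTotalDegree σ R n) (restrictTotalDegree σ R n))

namespace MvPolynomial

variable {σ R : Type*} [CommSemiring R]

theorem tmul_mem_tensorTotalDegreeFiltration {n : ℕ} {f g : MvPolynomial σ R}
    (hf : f.totalDegree ≤ n) (hg : g.totalDegree ≤ n) :
    f ⊗ₜ[R] g ∈ tensorTotalDegreeFiltration σ R n :=
  ⟨⟨f, (mem_restrictTotalDegree σ _ f).2 hf⟩ ⊗ₜ ⟨g, (mem_restrictTotalDegree σ _ g).2 hg⟩, rfl⟩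

theorem tensorTotalDegreeFiltration_mono : Monotone (tensorTotalDegreeFiltration σ R) :=
  fun _ _ h => range_mapIncl_mono (restrictTotalDegree_mono h) (restrictTotalDegree_mono h)

instance : SetLike.GradedMonoid (tensorTotalDegreeFiltration σ R) where
  one_mem := by
    rw [Algebra.TensorProduct.one_def]
    exact tmul_mem_tensorTotalDegreeFiltration (by simp) (by simp)
  mul_mem m n _ _ ha hb :=
    range_mapIncl_mono (restrictTotalDegree_mul_le m n) (restrictTotalDegree_mul_le m n) <|
      range_mapIncl_mul_le _ _ _ _ (Submodule.mul_mem_mul ha hb)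

end MvPolynomial

theorem UNComul_X_mem (N : ℕ) (ij : UTIdx N) :
    UNComul k N (X ij) ∈ tensorTotalDegreeFiltration (UTIdx N) k 1 := by
  rw [UNComul, aeval_X]
  refine add_mem (add_mem ?_ ?_) (Submodule.sum_mem _ fun t _ => ?_)
  · exact tmul_mem_tensorTotalDegreeFiltration (by simp) (by simp)
  · exact tmul_mem_tensorTotalDegreeFiltration (by simp) (by simp)
  · split_ifs
    · exact tmul_mem_tensorTotalDegreeFiltration (by simp) (by simp)
    · exact zero_mem _

theorem UNComul_mem_tensorTotalDegreeFiltration {N n : ℕ} {f : UNCoord k N}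
    (hf : f ∈ restrictTotalDegree (UTIdx N) k n) :
    UNComul k N f ∈ tensorTotalDegreeFiltration (UTIdx N) k n :=
  tensorTotalDegreeFiltration_mono ((mem_restrictTotalDegree _ _ f).1 hf) <|
    algHom_mem_of_gradedMonoid _ tensorTotalDegreeFiltration_mono _ (UNComul_X_mem N) f

section Comodule

variable {C M : Type} [AddCommGroup C] [Module k C] [AddCommGroup M] [Module k M]

theorem subFilt_eq_ker (ρ : M →ₗ[k] M ⊗[k] C) (B : Submodule k C) :
    subFilt ρ B = LinearMap.ker (LinearMap.lTensor M B.mkQ ∘ₗ ρ) := by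
  rw [subFilt, LinearMap.ker_comp,
    (lTensor_exact M (LinearMap.exact_subtype_mkQ B) B.mkQ_surjective).linearMap_ker_eq]

theorem coaction_mem_ker_rTensor {Δ : C →ₗ[k] C ⊗[k] C} {ρ : M →ₗ[k] M ⊗[k] C}
    (hρ : ∀ m, TensorProduct.assoc k M C C (LinearMap.rTensor C ρ (ρ m)) =
      LinearMap.lTensor M Δ (ρ m))
    {B : Submodule k C} (hB : ∀ b ∈ B, Δ b ∈ LinearMap.range (LinearMap.rTensor C B.subtype))
    {m : M} (hm : m ∈ subFilt ρ B) :
    ρ m ∈ LinearMap.ker (LinearMap.rTensor C (LinearMap.lTensor M B.mkQ ∘ₗ ρ)) := by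
  have hΔB : LinearMap.rTensor C B.mkQ ∘ₗ Δ ∘ₗ B.subtype = 0 := by
    ext b
    obtain ⟨z, hz⟩ := hB b b.2
    rw [LinearMap.comp_apply, LinearMap.comp_apply, Submodule.subtype_apply, ← hz]
    exact (rTensor_exact C (LinearMap.exact_subtype_mkQ B) B.mkQ_surjective).apply_apply_eq_zero z
  obtain ⟨y, hy⟩ := hm
  rw [LinearMap.mem_ker, LinearMap.rTensor_comp_apply]
  apply (TensorProduct.assoc k M (C ⧸ B) C).injective
  have hassoc : ∀ x, TensorProduct.assoc k M (C ⧸ B) C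
      (LinearMap.rTensor C (LinearMap.lTensor M B.mkQ) x) =
      LinearMap.lTensor M (LinearMap.rTensor C B.mkQ) (TensorProduct.assoc k M C C x) :=
    fun x => (map_map_assoc _ _ _ x).symm
  rw [hassoc, hρ, map_zero, ← hy, ← LinearMap.lTensor_comp_apply, ← LinearMap.lTensor_comp_apply,
    LinearMap.comp_assoc, hΔB, LinearMap.lTensor_zero, LinearMap.zero_apply]

theorem coaction_mem_range_mapIncl_subFilt {Δ : C →ₗ[k] C ⊗[k] C} {ρ : M →ₗ[k] M ⊗[k] C}
    (hρ : ∀ m, TensorProduct.assoc k M C C (LinearMap.rTensor C ρ (ρ m)) =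
      LinearMap.lTensor M Δ (ρ m))
    {B : Submodule k C} (hB : ∀ b ∈ B, Δ b ∈ LinearMap.range (LinearMap.rTensor C B.subtype))
    {m : M} (hm : m ∈ subFilt ρ B) :
    ρ m ∈ LinearMap.range (mapIncl (subFilt ρ B) B) := by
  have hker := coaction_mem_ker_rTensor hρ hB hm
  obtain ⟨y, hy⟩ := hm
  rw [subFilt_eq_ker]
  set g := LinearMap.lTensor M B.mkQ ∘ₗ ρ
  have hgy : y ∈ LinearMap.ker (LinearMap.rTensor B g) := by
    apply Module.Flat.lTensor_preserves_injective_linearMap B.subtype B.injective_subtype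
    rw [map_zero, LinearMap.lTensor_rTensor_comm_apply, hy]
    exact hker
  rw [(Module.Flat.rTensor_exact B (LinearMap.exact_subtype_ker_map g)).linearMap_ker_eq] at hgy
  obtain ⟨z, rfl⟩ := hgy
  exact ⟨z, (LinearMap.congr_fun (LinearMap.lTensor_comp_rTensor _ _ _) z).symm.trans hy⟩

theorem subFilt_le_comap_of_isComoduleMap {M' : Type} [AddCommGroup M'] [Module k M']
    {ρ' : M' →ₗ[k] M' ⊗[k] C} {ρ : M →ₗ[k] M ⊗[k] C} {f : M' →ₗ[k] M}
    (hf : IsComoduleMap ρ' ρ f) (B : Submodule k C) :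
    subFilt ρ' B ≤ (subFilt ρ B).comap f := by
  rintro m' ⟨y, hy⟩
  refine ⟨LinearMap.rTensor B f y, ?_⟩
  rw [LinearMap.lTensor_rTensor_comm_apply, hy]
  exact (LinearMap.congr_fun hf m').symm

end Comodule

theorem statement10_general (N : ℕ)
    {A : Type} [CommRing A] [Algebra k A]
    (π : UNCoord k N →ₐ[k] A)
    (ΔA : A →ₐ[k] A ⊗[k] A) (εA : A →ₐ[k] k)
    (hΔ : ∀ f, ΔA (π f) =
      TensorProduct.map π.toLinearMap π.toLinearMap (UNComul k N f))
    (d : ℕ)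
    {M : Type} [AddCommGroup M] [Module k M]
    (ρ : M →ₗ[k] M ⊗[k] A)
    (hρ : IsComodule ΔA.toLinearMap εA.toLinearMap ρ) :
    -- (1) `M_{<d} = (M_{<d})_{<d}`: the coaction of the subcomodule `M_{<d}` again
    -- lands in `M_{<d} ⊗ k[U]_{<d}`
    (∀ m ∈ subFilt ρ (Submodule.map π.toLinearMap (UNdegLT k N d)),
      ρ m ∈ LinearMap.range
        (TensorProduct.map
          (subFilt ρ (Submodule.map π.toLinearMap (UNdegLT k N d))).subtype
          (Submodule.map π.toLinearMap (UNdegLT k N d)).subtype)) ∧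
    -- (2) the inclusion `ι_d` of `k[U]_{<d}`-comodules into rational `U`-modules is
    -- left adjoint to `(-)_{<d}`: every map of rational `U`-modules `f : M′ → M` from a
    -- `k[U]_{<d}`-comodule `M′` factors (necessarily uniquely) through `M_{<d} ⊆ M`.
    (∀ (M' : Type) (_ : AddCommGroup M') (_ : Module k M')
        (ρ' : M' →ₗ[k] M' ⊗[k] A),
      IsComodule ΔA.toLinearMap εA.toLinearMap ρ' →
      (∀ m', ρ' m' ∈ LinearMap.range
        (LinearMap.lTensor M' (Submodule.map π.toLinearMap (UNdegLT k N d)).subtype)) →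
      ∀ f : M' →ₗ[k] M, IsComoduleMap ρ' ρ f →
        ∀ m', f m' ∈ subFilt ρ (Submodule.map π.toLinearMap (UNdegLT k N d))) := by
  set B := Submodule.map π.toLinearMap (UNdegLT k N d)
  have hB : ∀ b ∈ B, ΔA b ∈ LinearMap.range (LinearMap.rTensor A B.subtype) := fun b hb =>
    LinearMap.range_comp_le_range (LinearMap.lTensor B B.subtype) _ <| by
      rw [LinearMap.rTensor_comp_lTensor]
      exact comul_mem_range_mapIncl_map (Δ₀ := (UNComul k N).toLinearMap)
        (Δ := ΔA.toLinearMap) hΔ (fun _ hf => UNComul_mem_tensorTotalDegreeFiltration hf) hb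
  exact ⟨fun m hm => coaction_mem_range_mapIncl_subFilt hρ.1 hB hm,
    fun M' _ _ ρ' _ hρ' f hf m' => subFilt_le_comap_of_isComoduleMap hf B (hρ' m')⟩

theorem statement10 (p : ℕ) [Fact p.Prime] [CharP k p] [IsAlgClosed k] (N : ℕ)
    {A : Type} [CommRing A] [Algebra k A]
    (π : UNCoord k N →ₐ[k] A) (hπ : Function.Surjective π)
    (ΔA : A →ₐ[k] A ⊗[k] A) (εA : A →ₐ[k] k)
    (hΔ : ∀ f, ΔA (π f) =
      TensorProduct.map π.toLinearMap π.toLinearMap (UNComul k N f))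
    (hε : ∀ f, εA (π f) = UNCounit k N f)
    (d : ℕ) (hd : 0 < d)
    {M : Type} [AddCommGroup M] [Module k M]
    (ρ : M →ₗ[k] M ⊗[k] A)
    (hρ : IsComodule ΔA.toLinearMap εA.toLinearMap ρ) :
    -- (1) `M_{<d} = (M_{<d})_{<d}`: the coaction of the subcomodule `M_{<d}` again
    -- lands in `M_{<d} ⊗ k[U]_{<d}`
    (∀ m ∈ subFilt ρ (Submodule.map π.toLinearMap (UNdegLT k N d)),
      ρ m ∈ LinearMap.range
        (TensorProduct.map
          (subFilt ρ (Submodule.map π.toLinearMap (UNdegLT k N d))).subtype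
          (Submodule.map π.toLinearMap (UNdegLT k N d)).subtype)) ∧
    -- (2) the inclusion `ι_d` of `k[U]_{<d}`-comodules into rational `U`-modules is
    -- left adjoint to `(-)_{<d}`: every map of rational `U`-modules `f : M′ → M` from a
    -- `k[U]_{<d}`-comodule `M′` factors (necessarily uniquely) through `M_{<d} ⊆ M`.
    (∀ (M' : Type) (_ : AddCommGroup M') (_ : Module k M')
        (ρ' : M' →ₗ[k] M' ⊗[k] A),
      IsComodule ΔA.toLinearMap εA.toLinearMap ρ' →
      (∀ m', ρ' m' ∈ LinearMap.range
        (LinearMap.lTensor M' (Submodule.map π.toLinearMap (UNdegLT k N d)).subtype)) →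
      ∀ f : M' →ₗ[k] M, IsComoduleMap ρ' ρ f →
        ∀ m', f m' ∈ subFilt ρ (Submodule.map π.toLinearMap (UNdegLT k N d))) :=
  statement10_general N π ΔA εA hΔ d ρ hρ
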